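/- Let O₀ denote the ring of germs at 0 ∈ ℂ of ℂ-valued functions analytic at 0, and let g ∈ O₀. Consider the O₀-linear map T_g on the polynomial ring O₀[X]. Then: (1) if g ≠ 0 in O₀, T_g is injective; (2) T_g is surjective if and only if g(0) ≠ 0, where g(0) denotes the value at 0 of (any representative of) the germ g. (This is the paper's Example for the operator P = x²∂_x + g(s), localized at a parameter point s₀ = 0: the induced system of M = D_{X×S/S}/D_{X×S/S}·P along Y×S, Y = {0}, has coherent—indeed vanishing—cohomology near s₀ exactly when g(s₀) ≠ 0, exhibiting the necessity of the exceptional discrete set S₀ = g^{-1}(0) in the paper's Proposition 2 on holonomicity of induced systems.) -/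

import Mathlib

open Filter Polynomial Topology

/-- The `R`-linear map `T_g : R[X] → R[X]`, `T_g(p) = g•p + X·p''`, describing the right
action of the relative differential operator `P = x²∂_x + g(s)` on
`B^{(r)}_{{0}×S/S} = D_{X×S/S}/xD_{X×S/S} ≅ O_S[δ(x)]`, with `X^j` corresponding to
`δ^j(x)`. Equivalently `T_g(Σ_j a_j X^j) = Σ_j (j(j+1)·a_{j+1} + g·a_j)·X^j`. -/
noncomputable def Tg {R : Type*} [CommRing R] (g : R) : R[X] →ₗ[R] R[X] :=
  g • LinearMap.id +
    (LinearMap.mulLeft R (X : R[X])) ∘ₗ (Polynomial.derivative ∘ₗ Polynomial.derivative)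

/-- `O₀`: the ring of germs at `0 ∈ ℂ` of `ℂ`-valued functions analytic at `0`, realized
as the subring of `Filter.Germ (𝓝 0) ℂ` of germs admitting a representative that is
analytic at `0`. -/
noncomputable def O₀ : Subring (Germ (𝓝 (0 : ℂ)) ℂ) where
  carrier := {φ | ∃ f : ℂ → ℂ, AnalyticAt ℂ f 0 ∧ φ = (f : Germ (𝓝 (0 : ℂ)) ℂ)}
  zero_mem' := ⟨fun _ => 0, analyticAt_const, rfl⟩
  one_mem' := ⟨fun _ => 1, analyticAt_const, rfl⟩
  add_mem' := by
    rintro a b ⟨f, hf, rfl⟩ ⟨k, hk, rfl⟩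
    exact ⟨fun z => f z + k z, hf.add hk, rfl⟩
  mul_mem' := by
    rintro a b ⟨f, hf, rfl⟩ ⟨k, hk, rfl⟩
    exact ⟨fun z => f z * k z, hf.mul hk, rfl⟩
  neg_mem' := by
    rintro a ⟨f, hf, rfl⟩
    exact ⟨fun z => -f z, hf.neg, rfl⟩

/-!
Write `T_g = g + N` with `N = X·∂²`, which lowers degrees by one. Hence the top coefficient
of `T_g p` is `g` times that of `p`, so `T_g` is injective when `g` is a non-zero-divisor; and
`T_g` is triangular on monomials with diagonal `g`, so it is onto when `g` is a unit.
Conversely the constant term of `T_g p` is `g · p(0)`, so surjectivity forces `g` to be a unit.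
In `O₀`, a domain by the identity theorem, the units are the germs not vanishing at `0`.
-/

open scoped nonZeroDivisors

section Tg

variable {R : Type*} [CommRing R] (g : R)

lemma coeff_Tg (p : R[X]) (j : ℕ) :
    (Tg g p).coeff j = g * p.coeff j + (j : R) * ((j : R) + 1) * p.coeff (j + 1) := by
  cases j with
  | zero => simp [Tg, mul_coeff_zero]
  | succ j =>
    simp only [Tg, LinearMap.add_apply, LinearMap.smul_apply, LinearMap.id_apply,
      LinearMap.coe_comp, Function.comp_apply, LinearMap.mulLeft_apply, coeff_add,
      coeff_smul, smul_eq_mul, coeff_X_mul, coeff_derivative]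
    push_cast
    ring

lemma coeff_Tg_zero (p : R[X]) : (Tg g p).coeff 0 = g * p.coeff 0 := by
  simp [coeff_Tg]

lemma coeff_Tg_natDegree (p : R[X]) : (Tg g p).coeff p.natDegree = g * p.leadingCoeff := by
  rw [coeff_Tg, coeff_natDegree_succ_eq_zero, mul_zero, add_zero, leadingCoeff]

lemma Tg_C (a : R) : Tg g (C a) = C (g * a) := by
  ext j
  cases j <;> simp [coeff_Tg, coeff_C]

lemma Tg_monomial_succ (n : ℕ) (a : R) :
    Tg g (monomial (n + 1) a) = monomial (n + 1) (g * a) + monomial n ((n + 1) * n * a) := by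
  ext j
  simp only [coeff_Tg, coeff_add, coeff_monomial]
  rcases lt_trichotomy j n with h | rfl | h
  · simp [h.ne']
  · simp
    ring
  · simp [h.ne]

theorem Tg_injective_of_mem_nonZeroDivisors (hg : g ∈ R⁰) : Function.Injective (Tg g) := by
  rw [injective_iff_map_eq_zero]
  intro p hp
  by_contra hp0
  have hlead : g * p.leadingCoeff = 0 := by rw [← coeff_Tg_natDegree, hp, coeff_zero]
  exact leadingCoeff_ne_zero.mpr hp0 ((mul_left_mem_nonZeroDivisors_eq_zero_iff hg).mp hlead)

theorem Tg_surjective_iff_isUnit : Function.Surjective (Tg g) ↔ IsUnit g := by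
  constructor
  · intro hsurj
    obtain ⟨p, hp⟩ := hsurj 1
    exact IsUnit.of_mul_eq_one (p.coeff 0) (by rw [← coeff_Tg_zero, hp, coeff_one_zero])
  · rintro ⟨u, rfl⟩
    rw [← LinearMap.range_eq_top, eq_top_iff]
    rintro q -
    have hmonomial : ∀ n b, monomial n b ∈ LinearMap.range (Tg (u : R)) := by
      intro n
      induction n with
      | zero => exact fun b => ⟨C (u⁻¹ * b), by rw [Tg_C, Units.mul_inv_cancel_left]; rfl⟩
      | succ n ih =>
        intro b
        have h := Tg_monomial_succ (u : R) n (u⁻¹ * b)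
        rw [Units.mul_inv_cancel_left] at h
        rw [eq_sub_of_add_eq h.symm]
        exact Submodule.sub_mem _ ⟨_, rfl⟩ (ih _)
    induction q using Polynomial.induction_on' with
    | add p q hp hq => exact Submodule.add_mem _ hp hq
    | monomial n b => exact hmonomial n b

end Tg

theorem AnalyticAt.eventually_eq_zero_or_of_mul_eq_zero {𝕜 : Type*}
    [NontriviallyNormedField 𝕜] {f k : 𝕜 → 𝕜} {z₀ : 𝕜}
    (hf : AnalyticAt 𝕜 f z₀) (hk : AnalyticAt 𝕜 k z₀)
    (hfk : ∀ᶠ z in 𝓝 z₀, f z * k z = 0) :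
    (∀ᶠ z in 𝓝 z₀, f z = 0) ∨ ∀ᶠ z in 𝓝 z₀, k z = 0 := by
  rcases hf.eventually_eq_zero_or_eventually_ne_zero with hf0 | hf_ne
  · exact .inl hf0
  rcases hk.eventually_eq_zero_or_eventually_ne_zero with hk0 | hk_ne
  · exact .inr hk0
  obtain ⟨z, hfz, hkz, hfkz⟩ :=
    (hf_ne.and (hk_ne.and (hfk.filter_mono nhdsWithin_le_nhds))).exists
  exact absurd hfkz (mul_ne_zero hfz hkz)

namespace O₀

lemma eq_zero_iff {f : ℂ → ℂ} (hf : AnalyticAt ℂ f 0) :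
    (⟨f, f, hf, rfl⟩ : O₀) = 0 ↔ ∀ᶠ z in 𝓝 0, f z = 0 :=
  Subtype.ext_iff.trans Germ.coe_eq

instance : NoZeroDivisors O₀ where
  eq_zero_or_eq_zero_of_mul_eq_zero := by
    rintro ⟨_, f, hf, rfl⟩ ⟨_, k, hk, rfl⟩ hfk
    rw [eq_zero_iff hf, eq_zero_iff hk]
    exact hf.eventually_eq_zero_or_of_mul_eq_zero hk (Germ.coe_eq.mp (Subtype.ext_iff.mp hfk))

theorem isUnit_iff_value_ne_zero (g : O₀) :
    IsUnit g ↔ (g : Germ (𝓝 (0 : ℂ)) ℂ).value ≠ 0 := by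
  refine ⟨fun hg => (hg.map (Germ.valueRingHom.comp O₀.subtype)).ne_zero, ?_⟩
  obtain ⟨_, f, hf, rfl⟩ := g
  intro hf0
  refine IsUnit.of_mul_eq_one ⟨_, fun z => (f z)⁻¹, hf.inv hf0, rfl⟩ (Subtype.ext ?_)
  refine Germ.coe_eq.mpr ?_
  filter_upwards [hf.continuousAt.eventually_ne hf0] with z hz
  exact mul_inv_cancel₀ hz

end O₀

/-- For a germ `g ∈ O₀`: (1) if `g ≠ 0` then `T_g : O₀[X] → O₀[X]` is injective;
(2) `T_g` is surjective if and only if the value `g(0)` of the germ `g` at `0` is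
nonzero. -/
theorem Tg_injective_and_surjective_iff (g : O₀) :
    (g ≠ 0 → Function.Injective (Tg g)) ∧
    (Function.Surjective (Tg g) ↔ (g : Germ (𝓝 (0 : ℂ)) ℂ).value ≠ 0) :=
  ⟨fun hg => Tg_injective_of_mem_nonZeroDivisors g (mem_nonZeroDivisors_of_ne_zero hg),
    (Tg_surjective_iff_isUnit g).trans (O₀.isUnit_iff_value_ne_zero g)⟩
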